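/- Let n ≥ 2, let x = (x_1, …, x_n) ∈ ℝ^n with x_1 ≥ x_2 ≥ … ≥ x_n ≥ 0, Σ_{i=1}^n x_i² = 1 and x_1 + x_2 > 1, and let ε_1, …, ε_n be independent random variables with Pr(ε_i = 1) = Pr(ε_i = −1) = 1/2. Then Pr(|Σ_{i=1}^n ε_i x_i| ≤ 1) ≥ 93/256. -/
import Mathlib


open Classical Finset

/-- The sign `±1` associated to a Boolean: this encodes a Rademacher variable. -/
noncomputable def sgn (b : Bool) : ℝ := if b then 1 else -1

/-- Probability of an event under the uniform measure on the `2^n` sign vectors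
`ε ∈ {-1,1}^n`, encoded as Boolean vectors `σ : Fin n → Bool`. -/
noncomputable def prSign (n : ℕ) (P : (Fin n → Bool) → Prop) : ℝ :=
  ((Finset.univ.filter P).card : ℝ) / 2 ^ n

noncomputable def cind (c r : ℝ) : ℝ := if |r| ≤ c then 1 else 0

lemma cind_nonneg (c r : ℝ) : 0 ≤ cind c r := by
  unfold cind; split_ifs <;> norm_num

lemma cind_le_one (c r : ℝ) : cind c r ≤ 1 := by
  unfold cind; split_ifs <;> norm_num

lemma cind_one {c r : ℝ} (h : |r| ≤ c) : cind c r = 1 := if_pos h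

lemma cind_zero {c r : ℝ} (h : c < |r|) : cind c r = 0 := if_neg (not_le.mpr h)

lemma sgn_not (b : Bool) : sgn (!b) = - sgn b := by cases b <;> simp [sgn]

lemma flip_invol (n : ℕ) (j : Fin n) :
    Function.Involutive (fun σ : Fin n → Bool => Function.update σ j (!(σ j))) := by
  intro σ
  funext i
  by_cases h : i = j
  · subst h; simp
  · simp [Function.update_of_ne h]

lemma sum_flip (n : ℕ) (j : Fin n) (g : (Fin n → Bool) → ℝ) :
    ∑ σ : Fin n → Bool, g (Function.update σ j (!(σ j))) = ∑ σ : Fin n → Bool, g σ :=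
  Fintype.sum_bijective _ (flip_invol n j).bijective _ _ (fun _ => rfl)

lemma card_bool_fun (n : ℕ) : (Finset.univ : Finset (Fin n → Bool)).card = 2 ^ n := by
  simp [Finset.card_univ]

lemma sum_mul_sgn (n : ℕ) (j : Fin n) (f : (Fin n → Bool) → ℝ)
    (hf : ∀ σ b, f (Function.update σ j b) = f σ) :
    ∑ σ : Fin n → Bool, f σ * sgn (σ j) = 0 := by
  have h := sum_flip n j (fun σ => f σ * sgn (σ j))
  have h2 : ∀ σ : Fin n → Bool,
      f (Function.update σ j (!(σ j))) * sgn (Function.update σ j (!(σ j)) j)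
        = -(f σ * sgn (σ j)) := by
    intro σ
    rw [hf, Function.update_self, sgn_not]
    ring
  rw [Finset.sum_congr rfl fun σ _ => h2 σ] at h
  rw [Finset.sum_neg_distrib] at h
  linarith

lemma inner_upd (n : ℕ) (y : Fin n → ℝ) (B : Finset (Fin n)) (m : Fin n) (hm : m ∉ B)
    (σ : Fin n → Bool) (b : Bool) :
    (∑ i ∈ B, sgn (Function.update σ m b i) * y i) = ∑ i ∈ B, sgn (σ i) * y i :=
  Finset.sum_congr rfl fun i hi => by
    rw [Function.update_of_ne (ne_of_mem_of_not_mem hi hm)]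

lemma sq_moment (n : ℕ) (y : Fin n → ℝ) (A : Finset (Fin n)) :
    ∑ σ : Fin n → Bool, (∑ i ∈ A, sgn (σ i) * y i) ^ 2 = 2 ^ n * ∑ i ∈ A, (y i) ^ 2 := by
  induction A using Finset.induction_on with
  | empty => simp
  | @insert m B hm ih =>
    simp only [Finset.sum_insert hm]
    have expand : ∀ σ : Fin n → Bool,
        (sgn (σ m) * y m + ∑ i ∈ B, sgn (σ i) * y i) ^ 2
          = (∑ i ∈ B, sgn (σ i) * y i) ^ 2
            + (2 * y m) * ((∑ i ∈ B, sgn (σ i) * y i) * sgn (σ m)) + y m ^ 2 := by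
      intro σ; cases h : σ m <;> simp [sgn, h] <;> ring
    rw [Finset.sum_congr rfl fun σ _ => expand σ, Finset.sum_add_distrib,
      Finset.sum_add_distrib, ← Finset.mul_sum,
      sum_mul_sgn n m _ (fun σ b => inner_upd n y B m hm σ b), ih,
      Finset.sum_const, card_bool_fun, nsmul_eq_mul]
    push_cast
    ring

lemma quad_moment (n : ℕ) (y : Fin n → ℝ) (A : Finset (Fin n)) :
    ∑ σ : Fin n → Bool, (∑ i ∈ A, sgn (σ i) * y i) ^ 4
      ≤ 3 * 2 ^ n * (∑ i ∈ A, (y i) ^ 2) ^ 2 := by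
  induction A using Finset.induction_on with
  | empty => simp
  | @insert m B hm ih =>
    simp only [Finset.sum_insert hm]
    have expand : ∀ σ : Fin n → Bool,
        (sgn (σ m) * y m + ∑ i ∈ B, sgn (σ i) * y i) ^ 4
          = (∑ i ∈ B, sgn (σ i) * y i) ^ 4
            + (4 * y m) * ((∑ i ∈ B, sgn (σ i) * y i) ^ 3 * sgn (σ m))
            + 6 * y m ^ 2 * (∑ i ∈ B, sgn (σ i) * y i) ^ 2
            + (4 * y m ^ 3) * ((∑ i ∈ B, sgn (σ i) * y i) * sgn (σ m))
            + y m ^ 4 := by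
      intro σ; cases h : σ m <;> simp [sgn, h] <;> ring
    rw [Finset.sum_congr rfl fun σ _ => expand σ]
    rw [Finset.sum_add_distrib, Finset.sum_add_distrib, Finset.sum_add_distrib,
      Finset.sum_add_distrib, ← Finset.mul_sum, ← Finset.mul_sum, ← Finset.mul_sum,
      sum_mul_sgn n m (fun σ => (∑ i ∈ B, sgn (σ i) * y i) ^ 3)
        (fun σ b => by simp only [inner_upd n y B m hm σ b]),
      sum_mul_sgn n m _ (fun σ b => inner_upd n y B m hm σ b),
      sq_moment n y B, Finset.sum_const, card_bool_fun, nsmul_eq_mul]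
    push_cast
    have hVnn : (0:ℝ) ≤ ∑ i ∈ B, (y i) ^ 2 := Finset.sum_nonneg fun i _ => sq_nonneg _
    have h2n : (0:ℝ) < 2 ^ n := by positivity
    nlinarith [ih, mul_nonneg h2n.le (by positivity : (0:ℝ) ≤ y m ^ 4)]

lemma cheb2 (n : ℕ) (y : Fin n → ℝ) (c : ℝ) (hc : 0 < c) :
    2 ^ n * (1 - (∑ i, (y i) ^ 2) / c ^ 2)
      ≤ ∑ σ : Fin n → Bool, cind c (∑ i, sgn (σ i) * y i) := by
  have hpt : ∀ σ : Fin n → Bool,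
      1 - (∑ i, sgn (σ i) * y i) ^ 2 / c ^ 2 ≤ cind c (∑ i, sgn (σ i) * y i) := by
    intro σ
    set t := ∑ i, sgn (σ i) * y i with ht
    unfold cind
    split_ifs with h
    · have : (0:ℝ) ≤ t ^ 2 / c ^ 2 := by positivity
      linarith
    · push_neg at h
      have h1 : c ^ 2 ≤ t ^ 2 := by
        have := sq_abs t
        nlinarith [abs_nonneg t]
      have h2 : (1:ℝ) ≤ t ^ 2 / c ^ 2 := (one_le_div (by positivity)).mpr h1
      linarith
  calc 2 ^ n * (1 - (∑ i, (y i) ^ 2) / c ^ 2)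
      = ∑ σ : Fin n → Bool, (1 - (∑ i, sgn (σ i) * y i) ^ 2 / c ^ 2) := by
        rw [Finset.sum_sub_distrib, Finset.sum_const, card_bool_fun, nsmul_eq_mul,
          ← Finset.sum_div, sq_moment n y Finset.univ]
        push_cast; ring
    _ ≤ _ := Finset.sum_le_sum fun σ _ => hpt σ

lemma cheb4 (n : ℕ) (y : Fin n → ℝ) (c : ℝ) (hc : 0 < c) :
    2 ^ n * (1 - 3 * (∑ i, (y i) ^ 2) ^ 2 / c ^ 4)
      ≤ ∑ σ : Fin n → Bool, cind c (∑ i, sgn (σ i) * y i) := by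
  have hpt : ∀ σ : Fin n → Bool,
      1 - (∑ i, sgn (σ i) * y i) ^ 4 / c ^ 4 ≤ cind c (∑ i, sgn (σ i) * y i) := by
    intro σ
    set t := ∑ i, sgn (σ i) * y i with ht
    unfold cind
    split_ifs with h
    · have : (0:ℝ) ≤ t ^ 4 / c ^ 4 := by positivity
      linarith
    · push_neg at h
      have h0 : c ^ 2 ≤ t ^ 2 := by
        have := sq_abs t
        nlinarith [abs_nonneg t]
      have h1 : c ^ 4 ≤ t ^ 4 := by nlinarith [sq_nonneg c, sq_nonneg t]
      have h2 : (1:ℝ) ≤ t ^ 4 / c ^ 4 := (one_le_div (by positivity)).mpr h1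
      linarith
  have hsum : ∑ σ : Fin n → Bool, (1 - (∑ i, sgn (σ i) * y i) ^ 4 / c ^ 4)
      ≤ ∑ σ : Fin n → Bool, cind c (∑ i, sgn (σ i) * y i) :=
    Finset.sum_le_sum fun σ _ => hpt σ
  have heq : ∑ σ : Fin n → Bool, (1 - (∑ i, sgn (σ i) * y i) ^ 4 / c ^ 4)
      = 2 ^ n - (∑ σ : Fin n → Bool, (∑ i, sgn (σ i) * y i) ^ 4) / c ^ 4 := by
    rw [Finset.sum_sub_distrib, Finset.sum_const, card_bool_fun, nsmul_eq_mul,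
      ← Finset.sum_div]
    push_cast; ring
  have hm : (∑ σ : Fin n → Bool, (∑ i, sgn (σ i) * y i) ^ 4) / c ^ 4
      ≤ 3 * 2 ^ n * (∑ i, (y i) ^ 2) ^ 2 / c ^ 4 := by
    gcongr
    exact quad_moment n y Finset.univ
  have h2n : (0:ℝ) < 2 ^ n := by positivity
  calc 2 ^ n * (1 - 3 * (∑ i, (y i) ^ 2) ^ 2 / c ^ 4)
      ≤ 2 ^ n - (∑ σ : Fin n → Bool, (∑ i, sgn (σ i) * y i) ^ 4) / c ^ 4 := by
        have : 3 * 2 ^ n * (∑ i, (y i) ^ 2) ^ 2 / c ^ 4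
            = 2 ^ n * (3 * (∑ i, (y i) ^ 2) ^ 2 / c ^ 4) := by ring
        linarith [hm, this ▸ hm]
    _ = _ := heq.symm
    _ ≤ _ := hsum

lemma base (p q t : ℝ) (hq : 0 ≤ q) (hpq : q ≤ p) (hp : p ≤ 1) (hs : 1 < p + q) :
    cind (1 + (p - q)) t + cind ((p + q) + 1) t ≤
      cind 1 (t + (p + q)) + cind 1 (t + (p - q)) + cind 1 (t - (p - q))
        + cind 1 (t - (p + q)) := by
  have l1 := cind_le_one (1 + (p - q)) t
  have l2 := cind_le_one ((p + q) + 1) t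
  have n1 := cind_nonneg 1 (t + (p + q))
  have n2 := cind_nonneg 1 (t + (p - q))
  have n3 := cind_nonneg 1 (t - (p - q))
  have n4 := cind_nonneg 1 (t - (p + q))
  rcases le_or_gt |t| (1 + (p - q)) with h1 | h1
  · rcases le_or_gt |t| (1 - (p - q)) with h2 | h2
    · obtain ⟨ha, hb⟩ := abs_le.mp h2
      have c2 : cind 1 (t + (p - q)) = 1 := cind_one (abs_le.mpr ⟨by linarith, by linarith⟩)
      have c3 : cind 1 (t - (p - q)) = 1 := cind_one (abs_le.mpr ⟨by linarith, by linarith⟩)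
      rw [c2, c3]; linarith
    · obtain ⟨ha, hb⟩ := abs_le.mp h1
      rcases le_or_gt 0 t with ht0 | ht0
      · have habs : |t| = t := abs_of_nonneg ht0
        rw [habs] at h2
        have c3 : cind 1 (t - (p - q)) = 1 := cind_one (abs_le.mpr ⟨by linarith, by linarith⟩)
        have c4 : cind 1 (t - (p + q)) = 1 := cind_one (abs_le.mpr ⟨by linarith, by linarith⟩)
        rw [c3, c4]; linarith
      · have habs : |t| = -t := abs_of_neg ht0
        rw [habs] at h2
        have c1 : cind 1 (t + (p + q)) = 1 := cind_one (abs_le.mpr ⟨by linarith, by linarith⟩)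
        have c2 : cind 1 (t + (p - q)) = 1 := cind_one (abs_le.mpr ⟨by linarith, by linarith⟩)
        rw [c1, c2]; linarith
  · rw [cind_zero h1]
    rcases le_or_gt |t| ((p + q) + 1) with h3 | h3
    · obtain ⟨ha, hb⟩ := abs_le.mp h3
      rcases le_or_gt 0 t with ht0 | ht0
      · have habs : |t| = t := abs_of_nonneg ht0
        rw [habs] at h1
        have c4 : cind 1 (t - (p + q)) = 1 := cind_one (abs_le.mpr ⟨by linarith, by linarith⟩)
        rw [c4]; linarith
      · have habs : |t| = -t := abs_of_neg ht0
        rw [habs] at h1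
        have c1 : cind 1 (t + (p + q)) = 1 := cind_one (abs_le.mpr ⟨by linarith, by linarith⟩)
        rw [c1]; linarith
    · rw [cind_zero h3]; linarith

lemma wrap (p q u v t : ℝ) (hq : 0 ≤ q) (hpq : q ≤ p) (hp : p ≤ 1) (hs : 1 < p + q)
    (hu : u = p ∨ u = -p) (hv : v = q ∨ v = -q) :
    cind (1 + (p - q)) t + cind ((p + q) + 1) t ≤
      cind 1 (u + v + t) + cind 1 (-(u) + v + t) + cind 1 (u + -(v) + t)
        + cind 1 (-(u) + -(v) + t) := by
  have H := base p q t hq hpq hp hs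
  rcases hu with h1 | h1 <;> rcases hv with h2 | h2 <;> rw [h1, h2]
  · rw [show p + q + t = t + (p + q) by ring, show -p + q + t = t - (p - q) by ring,
      show p + -q + t = t + (p - q) by ring, show -p + -q + t = t - (p + q) by ring]
    linarith
  · rw [show p + -q + t = t + (p - q) by ring, show -p + -q + t = t - (p + q) by ring,
      show p + - -q + t = t + (p + q) by ring, show -p + - -q + t = t - (p - q) by ring]
    linarith
  · rw [show -p + q + t = t - (p - q) by ring, show - -p + q + t = t + (p + q) by ring,
      show -p + -q + t = t - (p + q) by ring, show - -p + -q + t = t + (p - q) by ring]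
    linarith
  · rw [show -p + -q + t = t - (p + q) by ring, show - -p + -q + t = t + (p - q) by ring,
      show -p + - -q + t = t - (p - q) by ring, show - -p + - -q + t = t + (p + q) by ring]
    linarith


lemma arith (p q V : ℝ) (hq : 0 ≤ q) (hpq : q ≤ p) (hp : p ≤ 1) (hs : 1 < p + q)
    (hV : V = 1 - p ^ 2 - q ^ 2) (hVnn : 0 ≤ V) :
    V / (1 + (p - q)) ^ 2 + 3 * V ^ 2 / ((p + q) + 1) ^ 4 ≤ 35 / 64 := by
  set a := p - q with hadef
  have ha : 0 ≤ a := by simp [hadef]; linarith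
  have ha1 : a ≤ 1 := by simp [hadef]; linarith
  have hs2 : 1 ≤ (p + q) ^ 2 := by nlinarith
  have h2V : 2 * V ≤ (1 - a) * (1 + a) := by simp only [hadef]; nlinarith
  have hd1 : (0:ℝ) < (1 + a) ^ 2 := by positivity
  have hd2 : (16:ℝ) ≤ ((p + q) + 1) ^ 4 := by nlinarith
  have ht2 : 3 * V ^ 2 / ((p + q) + 1) ^ 4 ≤ 3 * V ^ 2 / 16 :=
    div_le_div_of_nonneg_left (by positivity) (by norm_num) hd2
  have hb1 : V / (1 + a) ^ 2 ≤ (1 - a) / (2 * (1 + a)) := by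
    rw [div_le_div_iff₀ hd1 (by linarith)]
    nlinarith
  have hb2 : 3 * V ^ 2 / 16 ≤ 3 * ((1 - a) * (1 + a)) ^ 2 / 64 := by
    rw [div_le_div_iff₀ (by norm_num) (by norm_num)]
    nlinarith
  have hb3 : (1 - a) / (2 * (1 + a)) + 3 * ((1 - a) * (1 + a)) ^ 2 / 64 ≤ 35 / 64 := by
    rw [div_add_div _ _ (by linarith : (2 * (1 + a)) ≠ 0) (by norm_num : (64:ℝ) ≠ 0),
      div_le_div_iff₀ (by positivity) (by norm_num : (0:ℝ) < 64)]
    nlinarith [mul_nonneg ha (by nlinarith [(pow_le_one₀ ha ha1 : a ^ 3 ≤ 1),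
      (pow_le_one₀ ha ha1 : a ^ 4 ≤ 1)] :
      (0:ℝ) ≤ 64 + 6 * a + 6 * a ^ 2 - 3 * a ^ 3 - 3 * a ^ 4)]
  linarith

theorem stmt7 (n : ℕ) (hn : 2 ≤ n) (x : Fin n → ℝ)
    (hmono : ∀ i j : Fin n, i ≤ j → x j ≤ x i)
    (hnonneg : ∀ i, 0 ≤ x i)
    (hx : ∑ i, (x i) ^ 2 = 1)
    (h12 : x ⟨0, by omega⟩ + x ⟨1, by omega⟩ > 1) :
    prSign n (fun σ => |∑ i, sgn (σ i) * x i| ≤ 1) ≥ 93 / 256 := by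
  set j0 : Fin n := ⟨0, by omega⟩ with hj0
  set j1 : Fin n := ⟨1, by omega⟩ with hj1
  have h12' : 1 < x j0 + x j1 := h12
  have hj10 : j1 ≠ j0 := by rw [hj0, hj1]; simp [Fin.ext_iff]
  have hj01 : j0 ≠ j1 := by rw [hj0, hj1]; simp [Fin.ext_iff]
  have hxq : 0 ≤ x j1 := hnonneg j1
  have hx10 : x j1 ≤ x j0 := hmono j0 j1 (by rw [hj0, hj1]; exact Fin.mk_le_mk.mpr (by norm_num))
  have hx0le1 : x j0 ≤ 1 := by
    have hsq : x j0 ^ 2 ≤ 1 := by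
      rw [← hx]
      exact Finset.single_le_sum (fun i _ => sq_nonneg (x i)) (Finset.mem_univ j0)
    nlinarith [hnonneg j0]
  set y : Fin n → ℝ := fun i => if (i : ℕ) ≤ 1 then 0 else x i with hy
  have hy0 : y j0 = 0 := by simp [hy, hj0]
  have hy1 : y j1 = 0 := by simp [hy, hj1]
  have hsplit : ∀ g : Fin n → ℝ,
      ∑ i, g i = g j0 + g j1 + ∑ i : Fin n, (if (i : ℕ) ≤ 1 then 0 else g i) := by
    intro g
    have h1 : ∀ i : Fin n, g i
        = (if (i : ℕ) ≤ 1 then g i else 0) + (if (i : ℕ) ≤ 1 then 0 else g i) := by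
      intro i; split_ifs <;> ring
    rw [Finset.sum_congr rfl fun i _ => h1 i, Finset.sum_add_distrib]
    congr 1
    rw [← Finset.sum_filter]
    have hfil : Finset.univ.filter (fun i : Fin n => (i : ℕ) ≤ 1) = {j0, j1} := by
      ext i
      simp only [Finset.mem_filter, Finset.mem_univ, true_and, Finset.mem_insert,
        Finset.mem_singleton, hj0, hj1, Fin.ext_iff]
      omega
    rw [hfil, Finset.sum_pair hj01]
  set V : ℝ := ∑ i, (y i) ^ 2 with hVdef
  have hVnn : 0 ≤ V := by rw [hVdef]; exact Finset.sum_nonneg fun i _ => sq_nonneg _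
  have hVval : V = 1 - x j0 ^ 2 - x j1 ^ 2 := by
    have h1 := hsplit fun i => x i ^ 2
    rw [hx] at h1
    have h2 : V = ∑ i : Fin n, (if (i : ℕ) ≤ 1 then 0 else x i ^ 2) := by
      rw [hVdef]
      refine Finset.sum_congr rfl fun i _ => ?_
      simp only [hy]
      split_ifs <;> ring
    rw [h2]; linarith
  have hS : ∀ σ : Fin n → Bool,
      ∑ i, sgn (σ i) * x i
        = sgn (σ j0) * x j0 + sgn (σ j1) * x j1 + ∑ i, sgn (σ i) * y i := by
    intro σ
    have h1 := hsplit fun i => sgn (σ i) * x i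
    have h2 : ∑ i, sgn (σ i) * y i = ∑ i : Fin n, (if (i : ℕ) ≤ 1 then 0 else sgn (σ i) * x i) := by
      refine Finset.sum_congr rfl fun i _ => ?_
      simp only [hy]
      split_ifs <;> ring
    rw [h1, h2]
  have hTupd : ∀ (σ : Fin n → Bool) (b : Bool) (j : Fin n), y j = 0 →
      ∑ i, sgn (Function.update σ j b i) * y i = ∑ i, sgn (σ i) * y i := by
    intro σ b j hj
    refine Finset.sum_congr rfl fun i _ => ?_
    by_cases h : i = j
    · subst h; rw [hj]; ring
    · rw [Function.update_of_ne h]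
  have h2npos : (0:ℝ) < 2 ^ n := by positivity
  rw [ge_iff_le]
  unfold prSign
  rw [le_div_iff₀ h2npos]
  have hcard : ((Finset.univ.filter (fun σ : Fin n → Bool => |∑ i, sgn (σ i) * x i| ≤ 1)).card : ℝ)
      = ∑ σ : Fin n → Bool, cind 1 (∑ i, sgn (σ i) * x i) := by
    simp only [cind]
    rw [Finset.sum_boole]
  rw [hcard]
  set Q : ℝ := ∑ σ : Fin n → Bool, cind 1 (∑ i, sgn (σ i) * x i) with hQ
  have e0 : ∑ σ : Fin n → Bool, cind 1 (∑ i, sgn (Function.update σ j0 (!(σ j0)) i) * x i)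
      = ∑ σ : Fin n → Bool, cind 1 (∑ i, sgn (σ i) * x i) :=
    sum_flip n j0 fun τ => cind 1 (∑ i, sgn (τ i) * x i)
  have e1 : ∑ σ : Fin n → Bool, cind 1 (∑ i, sgn (Function.update σ j1 (!(σ j1)) i) * x i)
      = ∑ σ : Fin n → Bool, cind 1 (∑ i, sgn (σ i) * x i) :=
    sum_flip n j1 fun τ => cind 1 (∑ i, sgn (τ i) * x i)
  have e2 : ∑ σ : Fin n → Bool, cind 1 (∑ i, sgn (Function.update (Function.update σ j1 (!(σ j1))) j0
        (!(Function.update σ j1 (!(σ j1)) j0)) i) * x i)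
      = ∑ σ : Fin n → Bool, cind 1 (∑ i, sgn (Function.update σ j0 (!(σ j0)) i) * x i) :=
    sum_flip n j1 fun τ => cind 1 (∑ i, sgn (Function.update τ j0 (!(τ j0)) i) * x i)
  have hs1 : ∀ σ : Fin n → Bool, ∑ i, sgn (Function.update σ j0 (!(σ j0)) i) * x i
      = -(sgn (σ j0) * x j0) + sgn (σ j1) * x j1 + ∑ i, sgn (σ i) * y i := by
    intro σ
    rw [hS (Function.update σ j0 (!(σ j0))), hTupd σ (!(σ j0)) j0 hy0,
      Function.update_self, Function.update_of_ne hj10, sgn_not]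
    ring
  have hs2 : ∀ σ : Fin n → Bool, ∑ i, sgn (Function.update σ j1 (!(σ j1)) i) * x i
      = sgn (σ j0) * x j0 + -(sgn (σ j1) * x j1) + ∑ i, sgn (σ i) * y i := by
    intro σ
    rw [hS (Function.update σ j1 (!(σ j1))), hTupd σ (!(σ j1)) j1 hy1,
      Function.update_self, Function.update_of_ne hj01, sgn_not]
    ring
  have hs3 : ∀ σ : Fin n → Bool,
      ∑ i, sgn (Function.update (Function.update σ j1 (!(σ j1))) j0
        (!(Function.update σ j1 (!(σ j1)) j0)) i) * x i
      = -(sgn (σ j0) * x j0) + -(sgn (σ j1) * x j1) + ∑ i, sgn (σ i) * y i := by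
    intro σ
    rw [hS (Function.update (Function.update σ j1 (!(σ j1))) j0
        (!(Function.update σ j1 (!(σ j1)) j0))),
      hTupd (Function.update σ j1 (!(σ j1))) _ j0 hy0, hTupd σ (!(σ j1)) j1 hy1]
    simp only [Function.update_self, Function.update_of_ne hj01, Function.update_of_ne hj10,
      sgn_not]
    ring
  have hpt : ∀ σ : Fin n → Bool,
      cind (1 + (x j0 - x j1)) (∑ i, sgn (σ i) * y i)
        + cind ((x j0 + x j1) + 1) (∑ i, sgn (σ i) * y i)
      ≤ cind 1 (∑ i, sgn (σ i) * x i)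
        + cind 1 (∑ i, sgn (Function.update σ j0 (!(σ j0)) i) * x i)
        + cind 1 (∑ i, sgn (Function.update σ j1 (!(σ j1)) i) * x i)
        + cind 1 (∑ i, sgn (Function.update (Function.update σ j1 (!(σ j1))) j0
            (!(Function.update σ j1 (!(σ j1)) j0)) i) * x i) := by
    intro σ
    rw [hS σ, hs1 σ, hs2 σ, hs3 σ]
    exact wrap (x j0) (x j1) (sgn (σ j0) * x j0) (sgn (σ j1) * x j1) (∑ i, sgn (σ i) * y i)
      hxq hx10 hx0le1 h12'
      (by cases h : σ j0 <;> simp [sgn, h])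
      (by cases h : σ j1 <;> simp [sgn, h])
  have hsum := Finset.sum_le_sum fun σ (_ : σ ∈ (Finset.univ : Finset (Fin n → Bool))) => hpt σ
  rw [Finset.sum_add_distrib, Finset.sum_add_distrib, Finset.sum_add_distrib,
    Finset.sum_add_distrib, e2, e0, e1] at hsum
  rw [← hQ] at hsum
  have chebA := cheb2 n y (1 + (x j0 - x j1)) (by linarith)
  have chebB := cheb4 n y ((x j0 + x j1) + 1) (by linarith)
  rw [← hVdef] at chebA chebB
  have hscaled := mul_le_mul_of_nonneg_left
    (arith (x j0) (x j1) V hxq hx10 hx0le1 h12' hVval hVnn) h2npos.le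
  nlinarith [hsum, chebA, chebB, hscaled]
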